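/- Suppose every job j ∈ J satisfies c_min/2 < d_j ≤ c_min. Then J can be partitioned into at most 4r feasible rounds, where r is the congestion of the instance. -/

import Mathlib

open scoped Classical

namespace PathUFP

variable {ι : Type*}

/-- Job `i` uses the edge `e_{k+1}` (for `k : Fin m`, edges being 1-indexed
`e_1, …, e_m`) iff `s_i < k + 1 ≤ t_i`, i.e. iff `s_i ≤ k < t_i`. -/
def uses (s t : ι → ℕ) {m : ℕ} (i : ι) (k : Fin m) : Prop :=
  s i ≤ (k : ℕ) ∧ (k : ℕ) < t i

/-- The load of edge `e_{k+1}`: total demand of the jobs using it. -/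
noncomputable def load [Fintype ι] (s t : ι → ℕ) (d : ι → ℝ) {m : ℕ} (k : Fin m) : ℝ :=
  ∑ i : ι, if uses s t i k then d i else 0

/-- The congestion `r = max_k ⌈l_k / c_k⌉` of the instance. -/
noncomputable def congestion [Fintype ι] (s t : ι → ℕ) (d : ι → ℝ) {m : ℕ}
    (hm : 0 < m) (c : Fin m → ℝ) : ℤ :=
  Finset.univ.sup' ⟨⟨0, hm⟩, Finset.mem_univ _⟩ fun k => ⌈load s t d k / c k⌉

/-- The minimum edge capacity. -/
noncomputable def cmin {m : ℕ} (hm : 0 < m) (c : Fin m → ℝ) : ℝ :=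
  Finset.univ.inf' ⟨⟨0, hm⟩, Finset.mem_univ _⟩ c

/-- `f` is a Round-UFP packing of the jobs into `K` feasible rounds: on each round and
each edge, the total demand of the jobs of that round using that edge is at most the
capacity of the edge. -/
def IsPacking [Fintype ι] (s t : ι → ℕ) (d : ι → ℝ) {m : ℕ} (c : Fin m → ℝ)
    {K : ℕ} (f : ι → Fin K) : Prop :=
  ∀ (r : Fin K) (k : Fin m),
    (∑ i : ι, if f i = r ∧ uses s t i k then d i else 0) ≤ c k

end PathUFP

/-!
Let `u_k` be the number of jobs through edge `e_k` and `n_k = ⌊c_k / c_min⌋ ≥ 1`. Since every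
demand is at least `c_min / 2`,
`u_k c_min / 2 ≤ l_k ≤ r c_k ≤ r (n_k + 1) c_min ≤ 2 r n_k c_min`, so `u_k ≤ 4 r n_k`; and since
every demand is at most `c_min`, a round is feasible as soon as it has at most `n_k` jobs through
each `e_k`. So it suffices to colour the jobs with `K = 4r` colours so that at every edge any two
colour classes differ in size by at most one: a class then has at most `⌈u_k / K⌉ ≤ n_k` jobs
through `e_k`.

Such an equitable colouring exists because intervals have discrepancy one: every finite family of
intervals has a subfamily containing half (rounded up or down) of the intervals through each point.
A colouring minimising `∑_k ∑_q (size of class q at e_k)²` is then equitable, since splitting the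
union of two unbalanced classes by such a halving strictly decreases this sum.
-/

lemma sq_add_sq_le_of_balanced_add_eq {x y x' y' : ℕ} (h : x' + y' = x + y)
    (h₁ : x' ≤ y' + 1) (h₂ : y' ≤ x' + 1) : x' ^ 2 + y' ^ 2 ≤ x ^ 2 + y ^ 2 := by
  rcases lt_trichotomy x x' with hx | rfl | hx
  · nlinarith
  · rw [show y = y' by omega]
  · nlinarith

lemma sq_add_sq_lt_of_balanced_add_eq {x y x' y' : ℕ} (h : x' + y' = x + y)
    (h₁ : x' ≤ y' + 1) (h₂ : y' ≤ x' + 1) (hxy : x + 1 < y) :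
    x' ^ 2 + y' ^ 2 < x ^ 2 + y ^ 2 := by
  nlinarith

lemma sum_sq_add_eq_of_eq_off_pair {κ : Type*} [Fintype κ] [DecidableEq κ] {a b : κ → ℕ}
    {p q : κ} (hpq : p ≠ q) (hrest : ∀ o, o ≠ p → o ≠ q → b o = a o) :
    ∑ o, b o ^ 2 + (a p ^ 2 + a q ^ 2) = ∑ o, a o ^ 2 + (b p ^ 2 + b q ^ 2) := by
  rw [← Finset.sum_add_sum_compl {p, q}, ← Finset.sum_add_sum_compl {p, q} (fun o => a o ^ 2),
    Finset.sum_pair hpq, Finset.sum_pair hpq,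
    Finset.sum_congr rfl fun o ho => by
      simp only [Finset.mem_compl, Finset.mem_insert, Finset.mem_singleton, not_or] at ho
      rw [hrest o ho.1 ho.2]]
  ring

lemma le_of_forall_le_add_one_of_sum_le {κ : Type*} [Fintype κ] {a : κ → ℕ} {q : κ} {n : ℕ}
    (h : ∀ p, a q ≤ a p + 1) (hsum : ∑ p, a p ≤ Fintype.card κ * n) : a q ≤ n := by
  by_contra! hq
  have : ∑ p, (n + if p = q then 1 else 0) ≤ ∑ p, a p := Finset.sum_le_sum fun p _ => by
    have := h p
    split_ifs with hp
    · subst hp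
      omega
    · omega
  rw [Finset.sum_add_distrib, Finset.sum_const, Finset.sum_ite_eq', if_pos (Finset.mem_univ _),
    Finset.card_univ, smul_eq_mul] at this
  omega

namespace PathUFP

open Finset Function

variable {ι : Type*}

section Halving

variable {s : ι → ℕ}

def coverCount (s t : ι → ℕ) (S : Finset ι) (k : ℕ) : ℕ :=
  #{i ∈ S | s i ≤ k ∧ k < t i}

def IsHalving (s t : ι → ℕ) (S B : Finset ι) : Prop :=
  B ⊆ S ∧ ∀ k, coverCount s t S k / 2 ≤ coverCount s t B k ∧
    coverCount s t B k ≤ (coverCount s t S k + 1) / 2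

lemma coverCount_mono {t : ι → ℕ} {B S : Finset ι} (h : B ⊆ S) (k : ℕ) :
    coverCount s t B k ≤ coverCount s t S k :=
  card_le_card (filter_subset_filter _ h)

lemma coverCount_eq_add_erase {t : ι → ℕ} {S : Finset ι} {x : ι} (hx : x ∈ S) (k : ℕ) :
    coverCount s t S k =
      (if s x ≤ k ∧ k < t x then 1 else 0) + coverCount s t (S.erase x) k := by
  simp only [coverCount, card_filter]
  exact (add_sum_erase S _ hx).symm

lemma coverCount_update_of_notMem {t : ι → ℕ} {S : Finset ι} {x : ι} (hx : x ∉ S) (a k : ℕ) :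
    coverCount s (update t x a) S k = coverCount s t S k := by
  refine congrArg card (filter_congr fun i hi => ?_)
  rw [update_of_ne (ne_of_mem_of_not_mem hi hx)]

lemma coverCount_union_of_disjoint {t : ι → ℕ} {A C : Finset ι} (h : Disjoint A C) (k : ℕ) :
    coverCount s t (A ∪ C) k = coverCount s t A k + coverCount s t C k := by
  rw [coverCount, filter_union, card_union_of_disjoint (disjoint_filter_filter h)]
  rfl

section Induction

variable {t : ι → ℕ} {S : Finset ι}
  (ih : ∀ t' S', ∑ i ∈ S', (t' i - s i) < ∑ i ∈ S, (t i - s i) → ∃ B, IsHalving s t' S' B)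
include ih

/-- Halve the family in which `x` is cut down to `[s x, s y)` and `y` is dropped, then give `y`
to whichever side misses `x`. -/
lemma exists_isHalving_of_merge {x y : ι} (hx : x ∈ S) (hy : y ∈ S) (hxy : x ≠ y)
    (hs : s x ≤ s y) (hsy : s y < t y) (ht : t x = t y) : ∃ B, IsHalving s t S B := by
  set t' := update t x (s y)
  have hx' : x ∈ S.erase y := mem_erase.2 ⟨hxy, hx⟩
  obtain ⟨B', hB'S, hB'⟩ := ih t' (S.erase y) <| calc
    ∑ i ∈ S.erase y, (t' i - s i) ≤ ∑ i ∈ S.erase y, (t i - s i) :=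
      sum_le_sum fun i _ => Nat.sub_le_sub_right (update_le_self_iff.2 (by omega) i) _
    _ < ∑ i ∈ S.erase y, (t i - s i) + (t y - s y) := by omega
    _ = ∑ i ∈ S, (t i - s i) := sum_erase_add S _ hy
  have hS : ∀ k, coverCount s t S k =
      coverCount s t' (S.erase y) k + 2 * (if s y ≤ k ∧ k < t y then 1 else 0) := by
    intro k
    rw [coverCount_eq_add_erase hy, coverCount_eq_add_erase hx',
      coverCount_eq_add_erase (t := t') hx', coverCount_update_of_notMem (notMem_erase x _)]
    simp only [t', update_self]
    split_ifs <;> omega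
  have hB : ∃ B ⊆ S, ∀ k,
      coverCount s t B k = coverCount s t' B' k + (if s y ≤ k ∧ k < t y then 1 else 0) := by
    by_cases hxB : x ∈ B'
    · refine ⟨B', hB'S.trans (erase_subset _ _), fun k => ?_⟩
      rw [coverCount_eq_add_erase hxB, coverCount_eq_add_erase (t := t') hxB,
        coverCount_update_of_notMem (notMem_erase x _)]
      simp only [t', update_self]
      split_ifs <;> omega
    · have hyB : y ∉ B' := fun h => (mem_erase.1 (hB'S h)).1 rfl
      refine ⟨insert y B', insert_subset hy (hB'S.trans (erase_subset _ _)), fun k => ?_⟩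
      rw [coverCount_eq_add_erase (mem_insert_self y B'), erase_insert hyB,
        coverCount_update_of_notMem hxB, add_comm]
  obtain ⟨B, hBS, hB⟩ := hB
  refine ⟨B, hBS, fun k => ?_⟩
  have := hB' k
  rw [hS k, hB k]
  split_ifs <;> omega

/-- Shorten `x` by one and halve the result: at the point `t x - 1`, covered by `x` alone, every
subfamily is a halving. -/
lemma exists_isHalving_of_shrink {x : ι} (hx : x ∈ S) (hsx : s x < t x)
    (halone : ∀ i ∈ S, i ≠ x → ¬(s i ≤ t x - 1 ∧ t x - 1 < t i)) :
    ∃ B, IsHalving s t S B := by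
  set t' := update t x (t x - 1)
  obtain ⟨B, hBS, hB⟩ := ih t' S <| sum_lt_sum
    (fun i _ => Nat.sub_le_sub_right (update_le_self_iff.2 (Nat.sub_le _ _) i) _)
    ⟨x, hx, by simp only [t', update_self]; omega⟩
  refine ⟨B, hBS, fun k => ?_⟩
  by_cases hk : k = t x - 1
  · have hS : coverCount s t S k ≤ 1 := by
      have hxi : ∀ i ∈ {i ∈ S | s i ≤ k ∧ k < t i}, i = x := fun i hi => by
        rw [mem_filter] at hi
        by_contra h
        exact halone i hi.1 h (hk ▸ hi.2)
      exact card_le_one.2 fun i hi j hj => (hxi i hi).trans (hxi j hj).symm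
    have := coverCount_mono (s := s) (t := t) hBS k
    omega
  · have hagree : ∀ T, coverCount s t' T k = coverCount s t T k := fun T => by
      refine congrArg card (filter_congr fun i _ => ?_)
      by_cases hi : i = x
      · subst hi
        simp only [t', update_self]
        omega
      · simp only [t', update_of_ne hi]
    rw [← hagree S, ← hagree B]
    exact hB k

end Induction

theorem exists_isHalving (s t : ι → ℕ) (S : Finset ι) : ∃ B, IsHalving s t S B := by
  induction hn : ∑ i ∈ S, (t i - s i) using Nat.strong_induction_on generalizing t S with
  | _ n ih =>
  subst hn
  replace ih : ∀ t' S', ∑ i ∈ S', (t' i - s i) < ∑ i ∈ S, (t i - s i) →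
      ∃ B, IsHalving s t' S' B := fun t' S' h => ih _ h t' S' rfl
  by_cases hne : ({i ∈ S | s i < t i} : Finset ι).Nonempty
  · obtain ⟨x, hx, hmax⟩ := exists_max_image _ t hne
    rw [mem_filter] at hx
    by_cases hy : ∃ y ∈ S, y ≠ x ∧ s y < t y ∧ t y = t x
    · obtain ⟨y, hy, hyx, hsy, hty⟩ := hy
      rcases le_total (s x) (s y) with h | h
      · exact exists_isHalving_of_merge ih hx.1 hy hyx.symm h hsy hty.symm
      · exact exists_isHalving_of_merge ih hy hx.1 hyx h hx.2 hty
    · push Not at hy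
      refine exists_isHalving_of_shrink ih hx.1 hx.2 fun i hi hix hcov => ?_
      have := hmax i (mem_filter.2 ⟨hi, by omega⟩)
      have := hy i hi hix (by omega)
      omega
  · refine ⟨∅, empty_subset _, fun k => ?_⟩
    have : coverCount s t S k = 0 := card_eq_zero.2 <| filter_eq_empty_iff.2 fun i hi hcov =>
      hne ⟨i, mem_filter.2 ⟨hi, by omega⟩⟩
    have := coverCount_mono (s := s) (t := t) (empty_subset S) k
    omega

end Halving

section Coloring

variable [Fintype ι] {κ : Type*} [DecidableEq κ] {s t : ι → ℕ}

def colorCount (s t : ι → ℕ) (f : ι → κ) (q : κ) (k : ℕ) : ℕ :=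
  coverCount s t {i | f i = q} k

def colorEnergy [Fintype κ] (s t : ι → ℕ) (P : Finset ℕ) (f : ι → κ) : ℕ :=
  ∑ k ∈ P, ∑ q, colorCount s t f q k ^ 2

lemma sum_colorCount [Fintype κ] (f : ι → κ) (k : ℕ) :
    ∑ q, colorCount s t f q k = coverCount s t univ k := by
  rw [coverCount, card_eq_sum_card_fiberwise (f := f) (t := (univ : Finset κ))
    fun i _ => mem_coe.2 (mem_univ _)]
  simp only [colorCount, coverCount, filter_filter, and_comm]

lemma exists_recoloring (f : ι → κ) {p q : κ} (hpq : p ≠ q) {B : Finset ι}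
    (hB : B ⊆ ({i | f i = p ∨ f i = q} : Finset ι)) :
    ∃ f' : ι → κ, ({i | f' i = p} : Finset ι) = B ∧
      ({i | f' i = q} : Finset ι) = ({i | f i = p ∨ f i = q} : Finset ι) \ B ∧
      ∀ o, o ≠ p → o ≠ q → ({i | f' i = o} : Finset ι) = ({i | f i = o} : Finset ι) := by
  have hB' : ∀ i ∈ B, f i = p ∨ f i = q := fun i hi => (mem_filter.1 (hB hi)).2
  refine ⟨fun i => if f i = p ∨ f i = q then (if i ∈ B then p else q) else f i, ?_, ?_, ?_⟩
  · ext i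
    simp only [mem_filter, mem_univ, true_and]
    grind
  · ext i
    simp only [mem_filter, mem_univ, true_and, mem_sdiff]
    grind
  · intro o hop hoq
    ext i
    simp only [mem_filter, mem_univ, true_and]
    grind

lemma exists_colorEnergy_lt [Fintype κ] {P : Finset ℕ} {k₀ : ℕ} (hk₀ : k₀ ∈ P) (f : ι → κ) {p q : κ}
    (hpq : colorCount s t f p k₀ + 1 < colorCount s t f q k₀) :
    ∃ f' : ι → κ, colorEnergy s t P f' < colorEnergy s t P f := by
  have hne : p ≠ q := by
    rintro rfl
    omega
  set S : Finset ι := {i | f i = p ∨ f i = q} with hS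
  obtain ⟨B, hBS, hB⟩ := exists_isHalving s t S
  obtain ⟨f', hp, hq, ho⟩ := exists_recoloring f hne hBS
  rw [← hS] at hq
  have hdisj : Disjoint ({i | f i = p} : Finset ι) ({i | f i = q} : Finset ι) :=
    disjoint_filter.2 fun i _ h h' => hne (h.symm.trans h')
  have hbal : ∀ k, colorCount s t f' p k + colorCount s t f' q k =
        colorCount s t f p k + colorCount s t f q k ∧
      colorCount s t f' p k ≤ colorCount s t f' q k + 1 ∧
      colorCount s t f' q k ≤ colorCount s t f' p k + 1 := fun k => by
    have hS : coverCount s t S k = colorCount s t f p k + colorCount s t f q k := by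
      rw [colorCount, colorCount, ← coverCount_union_of_disjoint hdisj, ← filter_or]
    have hSB : coverCount s t S k = coverCount s t B k + coverCount s t (S \ B) k := by
      rw [← coverCount_union_of_disjoint disjoint_sdiff, union_sdiff_of_subset hBS]
    have := hB k
    rw [colorCount, colorCount, hp, hq, ← hS]
    omega
  have hsq : ∀ k, ∑ o, colorCount s t f' o k ^ 2 +
      (colorCount s t f p k ^ 2 + colorCount s t f q k ^ 2) =
      ∑ o, colorCount s t f o k ^ 2 + (colorCount s t f' p k ^ 2 + colorCount s t f' q k ^ 2) :=
    fun k => sum_sq_add_eq_of_eq_off_pair (a := (colorCount s t f · k))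
      (b := (colorCount s t f' · k)) hne fun o hop hoq => by simp only [colorCount, ho o hop hoq]
  refine ⟨f', sum_lt_sum (fun k _ => ?_) ⟨k₀, hk₀, ?_⟩⟩
  · obtain ⟨h, h₁, h₂⟩ := hbal k
    linarith [hsq k, sq_add_sq_le_of_balanced_add_eq h h₁ h₂]
  · obtain ⟨h, h₁, h₂⟩ := hbal k₀
    linarith [hsq k₀, sq_add_sq_lt_of_balanced_add_eq h h₁ h₂ hpq]

theorem exists_equitable_coloring [Fintype κ] [Nonempty (ι → κ)] (s t : ι → ℕ) (P : Finset ℕ) :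
    ∃ f : ι → κ, ∀ k ∈ P, ∀ p q, colorCount s t f q k ≤ colorCount s t f p k + 1 := by
  obtain ⟨f, hf⟩ := Finite.exists_min (colorEnergy (κ := κ) s t P)
  refine ⟨f, fun k hk p q => ?_⟩
  by_contra! h
  obtain ⟨f', hf'⟩ := exists_colorEnergy_lt hk f h
  exact (hf f').not_gt hf'

end Coloring

section Rounds

variable [Fintype ι] {m : ℕ} {c : Fin m → ℝ} {s t : ι → ℕ} {d : ι → ℝ}

lemma cmin_le (hm : 0 < m) (k : Fin m) : cmin hm c ≤ c k :=
  inf'_le _ (mem_univ k)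

lemma cmin_pos (hm : 0 < m) (hc : ∀ k, 0 < c k) : 0 < cmin hm c :=
  (lt_inf'_iff _).2 fun k _ => hc k

lemma load_le_congestion_mul (hm : 0 < m) (hc : ∀ k, 0 < c k) (k : Fin m) :
    load s t d k ≤ congestion s t d hm c * c k := by
  rw [← div_le_iff₀ (hc k)]
  exact (Int.le_ceil _).trans <| by
    exact_mod_cast le_sup' (fun k => ⌈load s t d k / c k⌉) (mem_univ k)

lemma congestion_nonneg (hm : 0 < m) (hc : ∀ k, 0 < c k) (hd : ∀ i, 0 ≤ d i) :
    0 ≤ congestion s t d hm c :=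
  le_sup'_of_le _ (mem_univ ⟨0, hm⟩) <| Int.ceil_nonneg <|
    div_nonneg (sum_nonneg fun i _ => ite_nonneg (hd i) le_rfl) (hc _).le

lemma coverCount_univ_eq_card_uses (k : Fin m) :
    coverCount s t univ k = #{i | uses s t i k} := by
  unfold coverCount uses
  congr 1
  ext
  simp

lemma colorCount_eq_card_uses {κ : Type*} [DecidableEq κ] (f : ι → κ) (q : κ) (k : Fin m) :
    colorCount s t f q k = #{i | f i = q ∧ uses s t i k} := by
  unfold colorCount coverCount uses
  congr 1
  ext
  simp

lemma coverCount_mul_le_load {a : ℝ} (h : ∀ i, a ≤ d i) (k : Fin m) :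
    coverCount s t univ k * a ≤ load s t d k := by
  rw [load, ← sum_filter, coverCount_univ_eq_card_uses, ← nsmul_eq_mul]
  exact card_nsmul_le_sum _ d a fun i _ => h i

lemma sum_round_demand_le {κ : Type*} [DecidableEq κ] (f : ι → κ) (q : κ) (k : Fin m) {a : ℝ}
    (h : ∀ i, d i ≤ a) :
    (∑ i, if f i = q ∧ uses s t i k then d i else 0) ≤ colorCount s t f q k * a := by
  rw [← sum_filter, colorCount_eq_card_uses, ← nsmul_eq_mul]
  exact sum_le_card_nsmul _ d a fun i _ => h i

lemma coverCount_le_four_mul_congestion (hm : 0 < m) (hc : ∀ k, 0 < c k)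
    (hd : ∀ i, cmin hm c / 2 ≤ d i) (k : Fin m) :
    (coverCount s t univ k : ℝ) ≤ 4 * congestion s t d hm c * ⌊c k / cmin hm c⌋₊ := by
  have hcmin := cmin_pos hm hc
  have hr : (0 : ℝ) ≤ congestion s t d hm c := by
    exact_mod_cast congestion_nonneg hm hc fun i => (half_pos hcmin).le.trans (hd i)
  set n := ⌊c k / cmin hm c⌋₊
  have hn : (1 : ℝ) ≤ n := by
    exact_mod_cast Nat.le_floor (by rw [Nat.cast_one, one_le_div hcmin]; exact cmin_le hm k)
  have hck : c k ≤ 2 * n * cmin hm c := by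
    have := Nat.lt_floor_add_one (c k / cmin hm c)
    rw [div_lt_iff₀ hcmin] at this
    nlinarith
  refine le_of_mul_le_mul_right ?_ (half_pos hcmin)
  calc (coverCount s t univ k : ℝ) * (cmin hm c / 2) ≤ load s t d k := coverCount_mul_le_load hd k
    _ ≤ congestion s t d hm c * c k := load_le_congestion_mul hm hc k
    _ ≤ congestion s t d hm c * (2 * n * cmin hm c) := by gcongr
    _ = 4 * congestion s t d hm c * n * (cmin hm c / 2) := by ring

end Rounds

end PathUFP

open PathUFP in
theorem packing_of_large_jobs_general {ι : Type*} [Fintype ι] {m : ℕ} (hm : 0 < m)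
    (c : Fin m → ℝ) (hc : ∀ k, 0 < c k)
    (s t : ι → ℕ) (d : ι → ℝ)
    (hst : ∀ i, s i < t i) (htm : ∀ i, t i ≤ m)
    (hlarge : ∀ i, cmin hm c / 2 < d i ∧ d i ≤ cmin hm c) :
    ∃ (K : ℕ) (f : ι → Fin K),
      (K : ℤ) ≤ 4 * congestion s t d hm c ∧ IsPacking s t d c f := by
  have hcmin := cmin_pos hm hc
  set r := congestion s t d hm c
  have hr : 0 ≤ r := congestion_nonneg hm hc fun i => by linarith [hlarge i]
  set K := (4 * r).toNat
  have hK : ((K : ℤ) : ℝ) = 4 * r := by rw [Int.toNat_of_nonneg (by omega)]; push_cast; ring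
  have hcount (k : Fin m) : coverCount s t Finset.univ k ≤ K * ⌊c k / cmin hm c⌋₊ := by
    have := coverCount_le_four_mul_congestion (s := s) (t := t) hm hc (fun i => (hlarge i).1.le) k
    rw [← hK] at this
    exact_mod_cast this
  have : Nonempty (ι → Fin K) := by
    rcases isEmpty_or_nonempty ι with hι | ⟨⟨i⟩⟩
    · infer_instance
    · have h1 : 0 < coverCount s t Finset.univ (s i) :=
        Finset.card_pos.2 ⟨i, Finset.mem_filter.2 ⟨Finset.mem_univ i, le_rfl, hst i⟩⟩
      have := hcount ⟨s i, (hst i).trans_le (htm i)⟩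
      exact ⟨fun _ => ⟨0, Nat.pos_of_mul_pos_right (h1.trans_le this)⟩⟩
  obtain ⟨f, hf⟩ := exists_equitable_coloring (κ := Fin K) s t (Finset.range m)
  refine ⟨K, f, by omega, fun q k => ?_⟩
  calc _ ≤ colorCount s t f q k * cmin hm c := sum_round_demand_le f q k fun i => (hlarge i).2
    _ ≤ ⌊c k / cmin hm c⌋₊ * cmin hm c := by
      gcongr
      refine le_of_forall_le_add_one_of_sum_le (a := (colorCount s t f · k))
        (fun p => hf k (Finset.mem_range.2 k.2) p q) ?_
      rw [sum_colorCount, Fintype.card_fin]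
      exact hcount k
    _ ≤ c k := (le_div_iff₀ hcmin).1 (Nat.floor_le (div_nonneg (hc k).le hcmin.le))

open PathUFP in
/-- Suppose every job `j ∈ J` satisfies `c_min / 2 < d_j ≤ c_min`.
Then `J` can be partitioned into at most `4r` feasible rounds, where `r` is the
congestion of the instance. -/
theorem packing_of_large_jobs {ι : Type*} [Fintype ι] {m : ℕ} (hm : 0 < m)
    (c : Fin m → ℝ) (hc : ∀ k, 0 < c k)
    (s t : ι → ℕ) (d : ι → ℝ)
    (hst : ∀ i, s i < t i) (htm : ∀ i, t i ≤ m) (hd : ∀ i, 0 < d i)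
    (hlarge : ∀ i, cmin hm c / 2 < d i ∧ d i ≤ cmin hm c) :
    ∃ (K : ℕ) (f : ι → Fin K),
      (K : ℤ) ≤ 4 * congestion s t d hm c ∧ IsPacking s t d c f :=
  packing_of_large_jobs_general hm c hc s t d hst htm hlarge
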